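/- Let p, k, n be naturals with p prime, k > 1 and n > 1. Let 𝒢 be any LCA over (ℤ/p^kℤ)^n with associated matrix B ∈ 𝕃_{p^k}^{n×n}, and let F be the LCA over (ℤ/pℤ)^n determined by the matrix A = (B mod p) ∈ 𝕃_p^{n×n}. Then 𝒢 is positively expansive if and only if F is positively expansive. -/

import Mathlib

open LaurentPolynomial
open scoped Classical

/-- `𝕃 m`: Laurent polynomials over `ℤ/mℤ`. -/
abbrev Lm (m : ℕ) := LaurentPolynomial (ZMod m)

/-- `deg⁺` of a Laurent polynomial: the max of its support (`⊥ = -∞` for `0`). -/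
noncomputable def degP {m : ℕ} (α : Lm m) : WithBot ℤ := (AddMonoidAlgebra.coeff α).support.max

/-- `deg⁻` of a Laurent polynomial: the min of its support (`⊤ = +∞` for `0`). -/
noncomputable def degM {m : ℕ} (α : Lm m) : WithTop ℤ := (AddMonoidAlgebra.coeff α).support.min

/-- A monic polynomial `π(t) = α₀ + α₁ t + ⋯ + α_{n-1} t^{n-1} + tⁿ` over `𝕃 m`
is *expansive* if `α₀ ≠ 0`, `deg⁺(α₀) > 0`, `deg⁺(α₀) > deg⁺(αᵢ)`,
`deg⁻(α₀) < 0` and `deg⁻(α₀) < deg⁻(αᵢ)` for all `1 ≤ i ≤ n-1`. -/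
def ExpansivePoly {m : ℕ} (π : Polynomial (Lm m)) : Prop :=
  π.coeff 0 ≠ 0 ∧
  ((0 : WithBot ℤ) < degP (π.coeff 0) ∧
    ∀ i : ℕ, 1 ≤ i → i < π.natDegree → degP (π.coeff i) < degP (π.coeff 0)) ∧
  (degM (π.coeff 0) < (0 : WithTop ℤ) ∧
    ∀ i : ℕ, 1 ≤ i → i < π.natDegree → degM (π.coeff 0) < degM (π.coeff i))

/-- A matrix over `𝕃 m` is expansive if its characteristic polynomial is. -/
noncomputable def ExpansiveMatrix {m n : ℕ} (A : Matrix (Fin n) (Fin n) (Lm m)) : Prop :=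
  ExpansivePoly A.charpoly

/-- The Tychonoff distance on the configuration space `(ℤ → S)`. -/
noncomputable def tdist {S : Type*} (c c' : ℤ → S) : ℝ :=
  if c = c' then 0
  else (2 : ℝ) ^ (-((sInf {k : ℕ | ∃ j : ℤ, j.natAbs = k ∧ c j ≠ c' j} : ℕ) : ℤ))

/-- A map on the configuration space is positively expansive if for some `ε > 0`
any two distinct configurations are eventually `≥ ε` apart. -/
def PosExpansive {S : Type*} (F : (ℤ → S) → (ℤ → S)) : Prop :=
  ∃ ε : ℝ, 0 < ε ∧ ∀ c c' : ℤ → S, c ≠ c' →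
    ∃ ℓ : ℕ, ε ≤ tdist (F^[ℓ] c) (F^[ℓ] c')

/-- The linear CA over `(ℤ/mℤ)ⁿ` determined by a matrix `A ∈ 𝕃_m^{n×n}`:
`F_A(c)_i = ∑_{k ∈ ℤ} A⁽ᵏ⁾ · c_{i-k}` where `A⁽ᵏ⁾` is the coefficient matrix of `Xᵏ` in `A`.
The same formula gives the action of `A` on two-sided formal power series `𝕊_m^n`. -/
noncomputable def lcaFun {m n : ℕ} (A : Matrix (Fin n) (Fin n) (Lm m)) :
    (ℤ → Fin n → ZMod m) → (ℤ → Fin n → ZMod m) :=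
  fun c i a => ∑ b, Finsupp.sum (AddMonoidAlgebra.coeff (A a b)) (fun k coef => coef * c (i - k) b)

/-- `Left(𝕊ⁿ_m, s)`: two-sided series with `deg⁺ = s`. -/
def SLeft {V : Type*} [Zero V] (s : ℤ) : Set (ℤ → V) :=
  {υ | (∀ j : ℤ, s < j → υ j = 0) ∧ υ s ≠ 0}

/-- `Left*(𝕊ⁿ_m, s)`: two-sided series with `deg⁺ ≤ s`. -/
def SLeftStar {V : Type*} [Zero V] (s : ℤ) : Set (ℤ → V) :=
  {υ | ∀ j : ℤ, s < j → υ j = 0}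

/-- `Right(𝕊ⁿ_m, s)`: two-sided series with `deg⁻ = s`. -/
def SRight {V : Type*} [Zero V] (s : ℤ) : Set (ℤ → V) :=
  {υ | (∀ j : ℤ, j < s → υ j = 0) ∧ υ s ≠ 0}

/-- `Right*(𝕊ⁿ_m, s)`: two-sided series with `deg⁻ ≥ s`. -/
def SRightStar {V : Type*} [Zero V] (s : ℤ) : Set (ℤ → V) :=
  {υ | ∀ j : ℤ, j < s → υ j = 0}

/-- Reduction of a Laurent polynomial over `ℤ/mℤ` modulo `q` (for `q ∣ m`). -/
noncomputable def lmod {m q : ℕ} (h : q ∣ m) (α : Lm m) : Lm q :=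
  AddMonoidAlgebra.ofCoeff (Finsupp.mapRange (ZMod.castHom h (ZMod q)) (map_zero _) (AddMonoidAlgebra.coeff α))

/-- Entrywise reduction of a matrix of Laurent polynomials modulo `q`. -/
noncomputable def matMod {m q n : ℕ} (h : q ∣ m) (B : Matrix (Fin n) (Fin n) (Lm m)) :
    Matrix (Fin n) (Fin n) (Lm q) :=
  fun a b => lmod h (B a b)

/-- `deg⁺` on the field of fractions of `𝕃 p`: `deg⁺(α/β) = deg⁺(α) - deg⁺(β)`,
computed on a representation given by `IsLocalization.sec`; `deg⁺ 0 = ⊥`. -/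
noncomputable def degPF {p : ℕ} (φ : FractionRing (Lm p)) : WithBot ℤ :=
  if φ = 0 then ⊥
  else (((degP ((IsLocalization.sec (nonZeroDivisors (Lm p)) φ).1)).unbotD 0
        - (degP (((IsLocalization.sec (nonZeroDivisors (Lm p)) φ).2 : Lm p))).unbotD 0 : ℤ) : WithBot ℤ)

/-- The `(x, y)` entry (with `ℕ`-indices) of the companion matrix of a polynomial `π`
viewed as a `d × d` matrix: subdiagonal entries `1`,
last column `(-π.coeff 0, …, -π.coeff (d-1))ᵀ`, the rest `0`. -/
def companionEntry {R : Type*} [CommRing R] (d : ℕ) (π : Polynomial R) (x y : ℕ) : R :=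
  if y = d - 1 then -π.coeff x else if x = y + 1 then 1 else 0

/-- The companion matrix (as a `d × d` matrix) of a polynomial `π`. -/
def companionMatrix {R : Type*} [CommRing R] (d : ℕ) (π : Polynomial R) :
    Matrix (Fin d) (Fin d) R :=
  fun a b => companionEntry d π a b

/-- A matrix is in rational canonical form if it is block diagonal with blocks the
companion matrices of monic polynomials `π₁, …, π_s` of degree at least one with
`πᵢ ∣ πⱼ` for `i ≤ j`.  The blocks are described by the offsets `off i` of their
top-left corners. -/
def IsRCF {R : Type*} [CommRing R] {n : ℕ} (C : Matrix (Fin n) (Fin n) R) : Prop :=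
  ∃ (s : ℕ) (π : Fin s → Polynomial R) (off : Fin (s + 1) → ℕ),
    (∀ i, (π i).Monic) ∧ (∀ i, 1 ≤ (π i).natDegree) ∧
    (∀ i j, i ≤ j → π i ∣ π j) ∧
    off 0 = 0 ∧ off (Fin.last s) = n ∧
    (∀ i : Fin s, off i.succ = off i.castSucc + (π i).natDegree) ∧
    (∀ (i : Fin s) (a b : Fin n),
      off i.castSucc ≤ (a : ℕ) → (a : ℕ) < off i.succ →
      off i.castSucc ≤ (b : ℕ) → (b : ℕ) < off i.succ →
      C a b = companionEntry (π i).natDegree (π i)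
        ((a : ℕ) - off i.castSucc) ((b : ℕ) - off i.castSucc)) ∧
    (∀ a b : Fin n,
      (∀ i : Fin s, ¬(off i.castSucc ≤ (a : ℕ) ∧ (a : ℕ) < off i.succ ∧
        off i.castSucc ≤ (b : ℕ) ∧ (b : ℕ) < off i.succ)) → C a b = 0)


/-! Multiplication by `p ^ (k - 1)` embeds `ℤ/p` into `ℤ/pᵏ` as its `p`-torsion, and applied
cellwise it intertwines `F` with `𝒢`; so `F` is a subsystem of `𝒢` and inherits positive
expansivity. Conversely, by linearity it suffices to separate a configuration `e ≠ 0` from `0`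
under `𝒢`. Some multiple `pᴺ e` is nonzero and `p`-torsion, hence the image of a configuration
`g ≠ 0` of `F`; wherever the `F`-orbit of `g` is nonzero, so is the `𝒢`-orbit of `e`. -/

section TorsionEmbedding

variable {m q : ℕ}

/-- `x ↦ (m / q) * x`, well defined because `q * (m / q) = m`. -/
noncomputable def torsionEmbedding (h : q ∣ m) : ZMod q →+ ZMod m :=
  ZMod.lift q ⟨zmultiplesHom _ ((m / q : ℕ) : ZMod m), by
    rw [zmultiplesHom_apply, natCast_zsmul, nsmul_eq_mul, ← Nat.cast_mul, Nat.mul_div_cancel' h,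
      ZMod.natCast_self]⟩

lemma torsionEmbedding_intCast (h : q ∣ m) (z : ℤ) :
    torsionEmbedding h (z : ZMod q) = z * ((m / q : ℕ) : ZMod m) := by
  rw [torsionEmbedding, ZMod.lift_coe, zmultiplesHom_apply, zsmul_eq_mul]

lemma torsionEmbedding_castHom_mul (h : q ∣ m) (a : ZMod m) (x : ZMod q) :
    torsionEmbedding h (ZMod.castHom h (ZMod q) a * x) = a * torsionEmbedding h x := by
  obtain ⟨w, rfl⟩ := ZMod.intCast_surjective a
  obtain ⟨z, rfl⟩ := ZMod.intCast_surjective x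
  rw [map_intCast, ← Int.cast_mul, torsionEmbedding_intCast, torsionEmbedding_intCast]
  push_cast
  ring

lemma torsionEmbedding_injective (hm : m ≠ 0) (h : q ∣ m) :
    Function.Injective (torsionEmbedding h) := by
  refine (ZMod.lift_injective q).mpr fun z hz => ?_
  obtain ⟨d, rfl⟩ := h
  have hd : (d : ℤ) ≠ 0 := by exact_mod_cast right_ne_zero_of_mul hm
  rw [zmultiplesHom_apply, zsmul_eq_mul, ← Int.cast_natCast, ← Int.cast_mul,
    ZMod.intCast_zmod_eq_zero_iff_dvd, Nat.mul_div_cancel_left d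
      (Nat.pos_of_ne_zero (left_ne_zero_of_mul hm)), Nat.cast_mul] at hz
  rw [ZMod.intCast_zmod_eq_zero_iff_dvd]
  exact Int.dvd_of_mul_dvd_mul_right hd hz

lemma exists_torsionEmbedding_eq (hm : m ≠ 0) (h : q ∣ m) {a : ZMod m} (ha : q • a = 0) :
    ∃ x, torsionEmbedding h x = a := by
  obtain ⟨d, rfl⟩ := h
  have hq : 0 < q := Nat.pos_of_ne_zero (left_ne_zero_of_mul hm)
  obtain ⟨w, rfl⟩ := ZMod.intCast_surjective a
  rw [← natCast_zsmul, zsmul_eq_mul, ← Int.cast_natCast, ← Int.cast_mul,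
    ZMod.intCast_zmod_eq_zero_iff_dvd, Nat.cast_mul] at ha
  obtain ⟨t, rfl⟩ := Int.dvd_of_mul_dvd_mul_left (by exact_mod_cast hq.ne') ha
  refine ⟨t, ?_⟩
  rw [torsionEmbedding_intCast, Nat.mul_div_cancel_left d hq]
  push_cast
  ring

end TorsionEmbedding

section LinearCA

variable {m n : ℕ}

noncomputable def lcaHom (A : Matrix (Fin n) (Fin n) (Lm m)) :
    AddMonoid.End (ℤ → Fin n → ZMod m) where
  toFun := lcaFun A
  map_zero' := by
    funext i a
    simp [lcaFun]
  map_add' c c' := by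
    funext i a
    simp only [lcaFun, Pi.add_apply, mul_add, Finsupp.sum_add, Finset.sum_add_distrib]

lemma lcaFun_semiconj_torsionEmbedding {q : ℕ} (h : q ∣ m) (B : Matrix (Fin n) (Fin n) (Lm m)) :
    Function.Semiconj (fun c => (torsionEmbedding h).compLeft (Fin n) ∘ c)
      (lcaFun (matMod h B)) (lcaFun B) := by
  intro c
  funext i a
  simp only [lcaFun, matMod, lmod, AddMonoidAlgebra.coeff_ofCoeff, Function.comp_apply,
    AddMonoidHom.compLeft_apply, map_sum]
  refine Finset.sum_congr rfl fun b _ => ?_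
  rw [Finsupp.sum_mapRange_index (fun _ => zero_mul _), map_finsuppSum]
  exact Finsupp.sum_congr fun K _ => torsionEmbedding_castHom_mul h _ _

end LinearCA

section Expansivity

variable {S T : Type*}

lemma tdist_nonneg (c c' : ℤ → S) : 0 ≤ tdist c c' := by
  unfold tdist
  split_ifs <;> positivity

lemma tdist_le_tdist_of_ne_imp_ne {c c' : ℤ → S} {d d' : ℤ → T}
    (h : ∀ j, d j ≠ d' j → c j ≠ c' j) : tdist d d' ≤ tdist c c' := by
  by_cases hd : d = d'
  · rw [tdist, if_pos hd]
    exact tdist_nonneg c c'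
  obtain ⟨j₀, hj₀⟩ := Function.ne_iff.mp hd
  have hc : c ≠ c' := Function.ne_iff.mpr ⟨j₀, h j₀ hj₀⟩
  rw [tdist, tdist, if_neg hd, if_neg hc]
  have hsInf : sInf {K : ℕ | ∃ j : ℤ, j.natAbs = K ∧ c j ≠ c' j}
      ≤ sInf {K : ℕ | ∃ j : ℤ, j.natAbs = K ∧ d j ≠ d' j} := by
    obtain ⟨j, hjK, hj⟩ := Nat.sInf_mem (s := {K : ℕ | ∃ j : ℤ, j.natAbs = K ∧ d j ≠ d' j})
      ⟨j₀.natAbs, j₀, rfl, hj₀⟩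
    exact Nat.sInf_le ⟨j, hjK, h j hj⟩
  exact zpow_le_zpow_right₀ one_le_two (neg_le_neg (by exact_mod_cast hsInf))

lemma PosExpansive.of_semiconj {ψ : S → T} (hψ : Function.Injective ψ)
    {F : (ℤ → S) → (ℤ → S)} {G : (ℤ → T) → (ℤ → T)} (hsc : Function.Semiconj (ψ ∘ ·) F G)
    (hG : PosExpansive G) : PosExpansive F := by
  obtain ⟨ε, hε, hexp⟩ := hG
  refine ⟨ε, hε, fun c c' hne => ?_⟩
  obtain ⟨l, hl⟩ := hexp (ψ ∘ c) (ψ ∘ c') (hψ.comp_left.ne hne)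
  refine ⟨l, hl.trans ?_⟩
  rw [← hsc.iterate_right l c, ← hsc.iterate_right l c']
  exact tdist_le_tdist_of_ne_imp_ne fun j hj heq => hj (congrArg ψ heq)

lemma PosExpansive.of_semiconj_of_nsmul {V W : Type*} [AddCommGroup V] [AddCommGroup W]
    {ψ : W →+ V} (hψ : Function.Injective ψ)
    {F : (ℤ → W) → (ℤ → W)} {G : AddMonoid.End (ℤ → V)} (hsc : Function.Semiconj (ψ ∘ ·) F G)
    (hreach : ∀ e : ℤ → V, e ≠ 0 → ∃ (N : ℕ) (g : ℤ → W), g ≠ 0 ∧ ψ ∘ g = N • e)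
    (hF : PosExpansive F) : PosExpansive G := by
  obtain ⟨ε, hε, hexp⟩ := hF
  refine ⟨ε, hε, fun c c' hne => ?_⟩
  obtain ⟨N, g, hg, hge⟩ := hreach (c - c') (sub_ne_zero.mpr hne)
  have hF0 : F 0 = 0 := hψ.comp_left <| by
    rw [hsc 0]
    ext j
    simp
  obtain ⟨l, hl⟩ := hexp g 0 hg
  rw [Function.iterate_fixed hF0] at hl
  refine ⟨l, hl.trans (tdist_le_tdist_of_ne_imp_ne fun j hj heq => hj ?_)⟩
  have hgl : ψ ∘ F^[l] g = N • ((G ^ l) c - (G ^ l) c') := by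
    rw [show ψ ∘ F^[l] g = (⇑G)^[l] (ψ ∘ g) from hsc.iterate_right l g, hge,
      ← AddMonoid.End.coe_pow, map_nsmul, map_sub]
  apply hψ
  simpa [heq] using congrFun hgl j

end Expansivity

lemma exists_pow_nsmul_ne_zero_and_nsmul_pow_nsmul_eq_zero {M : Type*} [AddMonoid M] {p k : ℕ}
    {x : M} (hx : x ≠ 0) (h : p ^ k • x = 0) : ∃ N : ℕ, p ^ N • x ≠ 0 ∧ p • p ^ N • x = 0 := by
  induction k generalizing x with
  | zero => exact absurd (by simpa using h) hx
  | succ k ih =>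
    by_cases hpx : p • x = 0
    · exact ⟨0, by simpa using hx, by simpa using hpx⟩
    · obtain ⟨N, hN, hN'⟩ := ih hpx (by rwa [smul_smul, ← pow_succ])
      refine ⟨N + 1, ?_, ?_⟩ <;> rwa [pow_succ, ← smul_smul]

lemma exists_comp_torsionEmbedding_eq_nsmul {p k : ℕ} (hp : p.Prime) (hk : k ≠ 0)
    {X Y : Type*} {e : X → Y → ZMod (p ^ k)} (he : e ≠ 0) :
    ∃ (N : ℕ) (g : X → Y → ZMod p),
      g ≠ 0 ∧ (torsionEmbedding (dvd_pow_self p hk)).compLeft Y ∘ g = N • e := by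
  have hpk : p ^ k • e = 0 := by
    ext j b
    rw [Pi.smul_apply, Pi.smul_apply, nsmul_eq_mul, ZMod.natCast_self, zero_mul]
    rfl
  obtain ⟨N, hN, hNp⟩ := exists_pow_nsmul_ne_zero_and_nsmul_pow_nsmul_eq_zero he hpk
  have hpre : ∀ j b, ∃ x, torsionEmbedding (dvd_pow_self p hk) x = (p ^ N • e) j b :=
    fun j b => exists_torsionEmbedding_eq (pow_ne_zero k hp.ne_zero) _
      (by simpa using congrFun (congrFun hNp j) b)
  choose g hg using hpre
  refine ⟨p ^ N, g, ?_, ?_⟩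
  · rintro rfl
    refine hN (funext₂ fun j b => ?_)
    rw [← hg]
    simp
  · funext j b
    exact hg j b

/-- part of Lemma `rispk`: an LCA `𝒢` over `(ℤ/pᵏℤ)ⁿ` with associated
matrix `B` is positively expansive iff the LCA `F` over `(ℤ/pℤ)ⁿ` determined by
`A = B mod p` is positively expansive. -/
theorem stmt11 (p k n : ℕ) (hp : p.Prime) (hk : 1 < k)
    (B : Matrix (Fin n) (Fin n) (Lm (p ^ k)))
    (G : (ℤ → Fin n → ZMod (p ^ k)) → (ℤ → Fin n → ZMod (p ^ k))) (hG : G = lcaFun B)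
    (F : (ℤ → Fin n → ZMod p) → (ℤ → Fin n → ZMod p))
    (hF : F = lcaFun (matMod (dvd_pow_self p (by omega : k ≠ 0)) B)) :
    PosExpansive G ↔ PosExpansive F := by
  have hk0 : k ≠ 0 := by omega
  subst hG hF
  have hψ : Function.Injective ((torsionEmbedding (dvd_pow_self p hk0)).compLeft (Fin n)) :=
    (torsionEmbedding_injective (pow_ne_zero k hp.ne_zero) (dvd_pow_self p hk0)).comp_left
  have hsc := lcaFun_semiconj_torsionEmbedding (dvd_pow_self p hk0) B
  exact ⟨PosExpansive.of_semiconj hψ hsc,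
    PosExpansive.of_semiconj_of_nsmul (G := lcaHom B) hψ hsc
      fun _ he => exists_comp_torsionEmbedding_eq_nsmul hp hk0 he⟩
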